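/- For a finite collection of rings {R_α}, the direct product ∏_α R_α is weakly strongly 2-nil-clean if and only if each R_α is weakly strongly 2-nil-clean and at most one R_α fails to be strongly 2-nil-clean. -/

import Mathlib

/-- A ring is weakly strongly 2-nil-clean if every element is `±e ± f + n` with
`e, f` idempotents and `n` nilpotent, all commuting with each other. -/
def IsWeaklyStrongly2NilClean (R : Type*) [Ring R] : Prop :=
  ∀ a : R, ∃ e f n : R, IsIdempotentElem e ∧ IsIdempotentElem f ∧ IsNilpotent n ∧
    Commute e f ∧ Commute e n ∧ Commute f n ∧
    (a = e + f + n ∨ a = e - f + n ∨ a = -e + f + n ∨ a = -e - f + n)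

/-- A ring is strongly 2-nil-clean if every element is `e + f + n` with
`e, f` idempotents and `n` nilpotent, all commuting with each other. -/
def IsStrongly2NilClean (R : Type*) [Ring R] : Prop :=
  ∀ a : R, ∃ e f n : R, IsIdempotentElem e ∧ IsIdempotentElem f ∧ IsNilpotent n ∧
    Commute e f ∧ Commute e n ∧ Commute f n ∧ a = e + f + n

/-!
Call `a` strongly 2-nil-clean if `a = e + f + n` with commuting idempotents `e, f` and nilpotent
`n`. Since `-e = (1 - e) - 1`, a ring is weakly strongly 2-nil-clean iff for every `a` one of
`a`, `a + 1`, `a + 2` is strongly 2-nil-clean, and in a finite product this can be checked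
componentwise.

The key fact is that if `a - 1` and `a + 1` are strongly 2-nil-clean, then so is `a`.
As `x (x - 1) (x - 2) = 0` for a sum `x` of two commuting idempotents, `(a - 1) a (a + 1)` is
nilpotent. Writing `a - 1 = e + f + n` and passing to the commutative subring generated by
`e, f, n` modulo its nilradical, this forces `6e = 6f = 0`, and then `a = e + f + 1` is again
a sum of two idempotents, which lift because the nilradical is nil. Consequently a ring that is
not strongly 2-nil-clean contains some `c` with neither `c` nor `c + 1` strongly 2-nil-clean.
If `R_j` is another such factor and `b ∈ R_j` is not strongly 2-nil-clean, the element with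
components `c` and `b - 2` has none of its three shifts strongly 2-nil-clean.
-/

section

variable {R S : Type*} [Ring R] [Ring S]

def IsStrongly2NilCleanElem (a : R) : Prop :=
  ∃ e f n : R, IsIdempotentElem e ∧ IsIdempotentElem f ∧ IsNilpotent n ∧
    Commute e f ∧ Commute e n ∧ Commute f n ∧ a = e + f + n

theorem IsStrongly2NilCleanElem.map {a : R} (h : IsStrongly2NilCleanElem a) (φ : R →+* S) :
    IsStrongly2NilCleanElem (φ a) := by
  obtain ⟨e, f, n, he, hf, hn, hef, hen, hfn, rfl⟩ := h
  exact ⟨φ e, φ f, φ n, he.map φ, hf.map φ, hn.map φ, hef.map φ, hen.map φ, hfn.map φ,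
    by rw [map_add, map_add]⟩

theorem Commute.one_sub_left {a b : R} (h : Commute a b) : Commute (1 - a) b :=
  (Commute.one_left b).sub_left h

theorem Commute.one_sub_right {a b : R} (h : Commute a b) : Commute a (1 - b) :=
  (Commute.one_right a).sub_right h

theorem IsNilpotent.pi {ι : Type*} [Finite ι] {A : ι → Type*} [∀ i, MonoidWithZero (A i)]
    {x : ∀ i, A i} (h : ∀ i, IsNilpotent (x i)) : IsNilpotent x := by
  have := Fintype.ofFinite ι
  choose k hk using h
  exact ⟨Finset.univ.sup k, funext fun i =>
    pow_eq_zero_of_le (Finset.le_sup (Finset.mem_univ i)) (hk i)⟩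

theorem IsStrongly2NilCleanElem.pi {ι : Type*} [Finite ι] {A : ι → Type*} [∀ i, Ring (A i)]
    {x : ∀ i, A i} (h : ∀ i, IsStrongly2NilCleanElem (x i)) : IsStrongly2NilCleanElem x := by
  choose e f n he hf hn hef hen hfn hx using h
  exact ⟨e, f, n, funext he, funext hf, IsNilpotent.pi hn, funext hef, funext hen, funext hfn,
    funext hx⟩

theorem IsStrongly2NilClean.pi {ι : Type*} [Finite ι] {A : ι → Type*} [∀ i, Ring (A i)]
    (h : ∀ i, IsStrongly2NilClean (A i)) : IsStrongly2NilClean (∀ i, A i) :=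
  fun x => IsStrongly2NilCleanElem.pi fun i => h i (x i)

theorem IsWeaklyStrongly2NilClean.of_surjective (h : IsWeaklyStrongly2NilClean R) (φ : R →+* S)
    (hφ : Function.Surjective φ) : IsWeaklyStrongly2NilClean S := fun b => by
  obtain ⟨a, rfl⟩ := hφ b
  obtain ⟨e, f, n, he, hf, hn, hef, hen, hfn, ha⟩ := h a
  refine ⟨φ e, φ f, φ n, he.map φ, hf.map φ, hn.map φ, hef.map φ, hen.map φ, hfn.map φ, ?_⟩
  rcases ha with rfl | rfl | rfl | rfl <;> simp only [map_add, map_sub, map_neg] <;> tauto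

theorem isWeaklyStrongly2NilClean_iff : IsWeaklyStrongly2NilClean R ↔
    ∀ a : R, IsStrongly2NilCleanElem a ∨ IsStrongly2NilCleanElem (a + 1) ∨
      IsStrongly2NilCleanElem (a + 2) := by
  refine forall_congr' fun a => ⟨?_, ?_⟩
  · rintro ⟨e, f, n, he, hf, hn, hef, hen, hfn, rfl | rfl | rfl | rfl⟩
    · exact .inl ⟨e, f, n, he, hf, hn, hef, hen, hfn, rfl⟩
    · exact .inr <| .inl ⟨e, 1 - f, n, he, hf.one_sub, hn, hef.one_sub_right, hen,
        hfn.one_sub_left, by abel⟩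
    · exact .inr <| .inl ⟨1 - e, f, n, he.one_sub, hf, hn, hef.one_sub_left, hen.one_sub_left,
        hfn, by abel⟩
    · exact .inr <| .inr ⟨1 - e, 1 - f, n, he.one_sub, hf.one_sub, hn,
        hef.one_sub_left.one_sub_right, hen.one_sub_left, hfn.one_sub_left, by
        rw [← one_add_one_eq_two]; abel⟩
  · rintro (⟨e, f, n, he, hf, hn, hef, hen, hfn, ha⟩ | ⟨e, f, n, he, hf, hn, hef, hen, hfn, ha⟩ |
      ⟨e, f, n, he, hf, hn, hef, hen, hfn, ha⟩)
    · exact ⟨e, f, n, he, hf, hn, hef, hen, hfn, .inl ha⟩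
    · refine ⟨e, 1 - f, n, he, hf.one_sub, hn, hef.one_sub_right, hen, hfn.one_sub_left,
        .inr <| .inl ?_⟩
      rw [eq_sub_of_add_eq ha]; abel
    · refine ⟨1 - e, 1 - f, n, he.one_sub, hf.one_sub, hn, hef.one_sub_left.one_sub_right,
        hen.one_sub_left, hfn.one_sub_left, .inr <| .inr <| .inr ?_⟩
      rw [eq_sub_of_add_eq ha, ← one_add_one_eq_two]; abel

theorem IsStrongly2NilClean.isWeaklyStrongly2NilClean (h : IsStrongly2NilClean R) :
    IsWeaklyStrongly2NilClean R :=
  isWeaklyStrongly2NilClean_iff.mpr fun a => .inl (h a)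

section CommRing

variable {A : Type*} [CommRing A] {e f : A}

theorem IsIdempotentElem.add_sub_two_mul_add_sub_one_mul_add (he : IsIdempotentElem e)
    (hf : IsIdempotentElem f) : (e + f - 2) * (e + f - 1) * (e + f) = 0 := by
  linear_combination (-2 + 3 * f + e) * he.eq + (-2 + f + 3 * e) * hf.eq

theorem IsIdempotentElem.exists_add_add_one_eq_add [IsReduced A] (he : IsIdempotentElem e)
    (hf : IsIdempotentElem f) (h : (e + f) * (e + f + 1) * (e + f + 2) = 0) :
    ∃ e' f' : A, IsIdempotentElem e' ∧ IsIdempotentElem f' ∧ e + f + 1 = e' + f' := by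
  -- `h` reads `6e + 6f + 12ef = 0`, which in a reduced ring forces `6e = 6f = 0`. The witnesses
  -- come from the orthogonal idempotents `e(1-f), f(1-e), ef, (1-e)(1-f)`, each split into its
  -- 2-torsion part `3p` and 3-torsion part `-2p`.
  have hs : 6 * e + 6 * f + 12 * (e * f) = 0 := by
    linear_combination h - (4 + 3 * f + e) * he.eq - (4 + f + 3 * e) * hf.eq
  have h24 : 24 * (e * f) = 0 := by
    linear_combination (e * f) * hs - (6 * f + 12 * f ^ 2) * he.eq - 18 * e * hf.eq
  have h6ef : 6 * (e * f) = 0 := IsNilpotent.eq_zero ⟨3, by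
    linear_combination (216 * f ^ 3 + 216 * e * f ^ 3) * he.eq + (216 * e + 216 * e * f) * hf.eq
      + 9 * h24⟩
  have h6e : 6 * e = 0 := by linear_combination e * hs - 3 * h6ef - (6 + 12 * f) * he.eq
  have h6f : 6 * f = 0 := by linear_combination f * hs - 3 * h6ef - (6 + 12 * e) * hf.eq
  refine ⟨-2 * (e + f + e * f), 1 + 3 * e + 3 * f + 2 * (e * f), ?_, ?_, by ring⟩
  · show _ * _ = _
    linear_combination (4 + 8 * f + 4 * f ^ 2) * he.eq + (4 + 12 * e) * hf.eq + h6e + h6f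
      + 5 * f * h6e
  · show _ * _ = _
    linear_combination (9 + 12 * f + 4 * f ^ 2) * he.eq + (9 + 16 * e) * hf.eq + 2 * h6e
      + 2 * h6f + 8 * f * h6e

instance Ideal.Quotient.isReduced_nilradical : IsReduced (A ⧸ nilradical A) :=
  (Ideal.isRadical_iff_quotient_reduced _).mp (Ideal.radical_isRadical ⊥)

theorem isStrongly2NilCleanElem_iff_exists_mk_eq_add {a : A} :
    IsStrongly2NilCleanElem a ↔ ∃ e f : A ⧸ nilradical A, IsIdempotentElem e ∧
      IsIdempotentElem f ∧ Ideal.Quotient.mk _ a = e + f := by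
  have hker : ∀ x ∈ RingHom.ker (Ideal.Quotient.mk (nilradical A)), IsNilpotent x := by
    simp [Ideal.mk_ker, mem_nilradical]
  constructor
  · rintro ⟨e, f, n, he, hf, hn, -, -, -, rfl⟩
    refine ⟨_, _, he.map (Ideal.Quotient.mk _), hf.map (Ideal.Quotient.mk _), ?_⟩
    rw [map_add, Ideal.Quotient.eq_zero_iff_mem.mpr (mem_nilradical.mpr hn), add_zero, map_add]
  · rintro ⟨e, f, he, hf, ha⟩
    obtain ⟨e', he', rfl⟩ := exists_isIdempotentElem_eq_of_ker_isNilpotent _ hker e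
      (Ideal.Quotient.mk_surjective e) he
    obtain ⟨f', hf', rfl⟩ := exists_isIdempotentElem_eq_of_ker_isNilpotent _ hker f
      (Ideal.Quotient.mk_surjective f) hf
    refine ⟨e', f', a - e' - f', he', hf', hker _ ?_, .all _ _, .all _ _, .all _ _, by abel⟩
    rw [RingHom.mem_ker, map_sub, map_sub, ha]; abel

theorem IsStrongly2NilCleanElem.isNilpotent_sub_two_mul_sub_one_mul_self {a : A}
    (h : IsStrongly2NilCleanElem a) : IsNilpotent ((a - 2) * (a - 1) * a) := by
  obtain ⟨e, f, he, hf, ha⟩ := isStrongly2NilCleanElem_iff_exists_mk_eq_add.mp h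
  rw [← mem_nilradical, ← Ideal.Quotient.eq_zero_iff_mem]
  simpa [ha, map_ofNat] using he.add_sub_two_mul_add_sub_one_mul_add hf

theorem IsStrongly2NilCleanElem.add_one_of_isNilpotent {a : A} (h : IsStrongly2NilCleanElem a)
    (hn : IsNilpotent (a * (a + 1) * (a + 2))) : IsStrongly2NilCleanElem (a + 1) := by
  obtain ⟨e, f, he, hf, ha⟩ := isStrongly2NilCleanElem_iff_exists_mk_eq_add.mp h
  rw [← mem_nilradical, ← Ideal.Quotient.eq_zero_iff_mem] at hn
  obtain ⟨e', f', he', hf', hef⟩ :=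
    he.exists_add_add_one_eq_add hf (by simpa [ha, map_ofNat] using hn)
  exact isStrongly2NilCleanElem_iff_exists_mk_eq_add.mpr ⟨e', f', he', hf', by simp [ha, hef]⟩

end CommRing

theorem IsStrongly2NilCleanElem.exists_isMulCommutative_subring {a : R}
    (h : IsStrongly2NilCleanElem a) : ∃ C : Subring R, IsMulCommutative C ∧
      ∃ b : C, (b : R) = a ∧ IsStrongly2NilCleanElem b := by
  obtain ⟨e, f, n, he, hf, hn, hef, hen, hfn, rfl⟩ := h
  have hcomm : ∀ x ∈ ({e, f, n} : Set R), ∀ y ∈ ({e, f, n} : Set R), x * y = y * x := by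
    intro x hx y hy
    simp only [Set.mem_insert_iff, Set.mem_singleton_iff] at hx hy
    rcases hx with rfl | rfl | rfl <;> rcases hy with rfl | rfl | rfl <;>
      first | rfl | exact hef.eq | exact hef.symm.eq | exact hen.eq | exact hen.symm.eq |
        exact hfn.eq | exact hfn.symm.eq
  let e' : Subring.closure {e, f, n} := ⟨e, Subring.subset_closure (by simp)⟩
  let f' : Subring.closure {e, f, n} := ⟨f, Subring.subset_closure (by simp)⟩
  let n' : Subring.closure {e, f, n} := ⟨n, Subring.subset_closure (by simp)⟩
  refine ⟨_, Subring.isMulCommutative_closure hcomm, e' + f' + n', rfl, e', f', n',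
    Subtype.ext he, Subtype.ext hf, ?_, Subtype.ext hef, Subtype.ext hen, Subtype.ext hfn, rfl⟩
  exact (IsNilpotent.map_iff (Subring.closure ({e, f, n} : Set R)).subtype_injective).mp hn

open scoped IsMulCommutative in
theorem IsStrongly2NilCleanElem.of_sub_one_of_add_one {a : R}
    (h₁ : IsStrongly2NilCleanElem (a - 1)) (h₂ : IsStrongly2NilCleanElem (a + 1)) :
    IsStrongly2NilCleanElem a := by
  have hcube : IsNilpotent ((a - 1) * a * (a + 1)) := by
    obtain ⟨C, _, b, hb, hP⟩ := h₂.exists_isMulCommutative_subring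
    have := hP.isNilpotent_sub_two_mul_sub_one_mul_self.map C.subtype
    simp only [map_mul, map_sub, map_one, map_ofNat, Subring.coe_subtype, hb] at this
    simpa [show a + 1 - 2 = a - 1 by rw [← one_add_one_eq_two]; abel] using this
  obtain ⟨C, _, b, hb, hP⟩ := h₁.exists_isMulCommutative_subring
  have hb' : IsNilpotent (b * (b + 1) * (b + 2)) := by
    rw [← IsNilpotent.map_iff C.subtype_injective]
    simp only [map_mul, map_add, map_one, map_ofNat, Subring.coe_subtype, hb]
    simpa [show a - 1 + 2 = a + 1 by rw [← one_add_one_eq_two]; abel] using hcube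
  simpa [hb] using (hP.add_one_of_isNilpotent hb').map C.subtype

theorem exists_not_isStrongly2NilCleanElem_and_add_one (h : ¬ IsStrongly2NilClean R) :
    ∃ c : R, ¬ IsStrongly2NilCleanElem c ∧ ¬ IsStrongly2NilCleanElem (c + 1) := by
  obtain ⟨a, ha⟩ := not_forall.mp h
  by_cases ha₁ : IsStrongly2NilCleanElem (a + 1)
  · exact ⟨a - 1, fun h => ha (h.of_sub_one_of_add_one ha₁), by rwa [sub_add_cancel]⟩
  · exact ⟨a, ha, ha₁⟩

theorem IsWeaklyStrongly2NilClean.isStrongly2NilClean_of_prod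
    (h : IsWeaklyStrongly2NilClean (R × S)) (hR : ¬ IsStrongly2NilClean R) :
    IsStrongly2NilClean S := fun b => by
  obtain ⟨c, hc, hc₁⟩ := exists_not_isStrongly2NilCleanElem_and_add_one hR
  rcases isWeaklyStrongly2NilClean_iff.mp h (c, b - 2) with h₀ | h₁ | h₂
  · exact absurd (h₀.map (RingHom.fst R S)) hc
  · exact absurd (by simpa using h₁.map (RingHom.fst R S)) hc₁
  · show IsStrongly2NilCleanElem b
    simpa using h₂.map (RingHom.snd R S)

theorem isWeaklyStrongly2NilClean_pi_of_forall_ne {ι : Type*} [Finite ι] {A : ι → Type*}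
    [∀ i, Ring (A i)] {j : ι} (hj : IsWeaklyStrongly2NilClean (A j))
    (h : ∀ i ≠ j, IsStrongly2NilClean (A i)) : IsWeaklyStrongly2NilClean (∀ i, A i) := by
  have hlift (x : ∀ i, A i) (hx : IsStrongly2NilCleanElem (x j)) : IsStrongly2NilCleanElem x :=
    IsStrongly2NilCleanElem.pi fun i => by
      by_cases hi : i = j
      · subst hi; exact hx
      · exact h i hi (x i)
  rw [isWeaklyStrongly2NilClean_iff]
  exact fun x =>
    (isWeaklyStrongly2NilClean_iff.mp hj (x j)).imp (hlift x) (.imp (hlift _) (hlift _))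

end

theorem pi_wsnc_iff {ι : Type*} [Fintype ι] (R : ι → Type*) [∀ i, Ring (R i)] :
    IsWeaklyStrongly2NilClean (∀ i, R i) ↔
      (∀ i, IsWeaklyStrongly2NilClean (R i)) ∧
      (∀ i j, ¬ IsStrongly2NilClean (R i) → ¬ IsStrongly2NilClean (R j) → i = j) := by
  classical
  refine ⟨fun h => ⟨fun i => h.of_surjective (Pi.evalRingHom R i) (Function.surjective_eval i),
    fun i j hi hj => ?_⟩, fun ⟨hw, huniq⟩ => ?_⟩
  · by_contra hij
    have hsurj : Function.Surjective ((Pi.evalRingHom R i).prod (Pi.evalRingHom R j)) :=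
      fun p => ⟨Pi.single i p.1 + Pi.single j p.2, by simp [hij, Ne.symm hij]⟩
    exact hj ((h.of_surjective _ hsurj).isStrongly2NilClean_of_prod hi)
  · by_cases hall : ∀ i, IsStrongly2NilClean (R i)
    · exact (IsStrongly2NilClean.pi hall).isWeaklyStrongly2NilClean
    · obtain ⟨j, hj⟩ := not_forall.mp hall
      exact isWeaklyStrongly2NilClean_pi_of_forall_ne (hw j)
        fun i hi => not_not.mp fun h => hi (huniq i j h hj)
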